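/- On ℝ⁴ with coordinates z = (q, p, u, v) (indices 1,2,3,4), define the smooth totally antisymmetric tensor field λ by λ_{ijk} = ε_{ijk} when {i,j,k} = {1,2,3} (with λ_{123} = 1), λ_{ijk} = −2p·ε_{ijk} when {i,j,k} = {1,3,4} (with the convention ε_{134} = 1), and λ_{ijk} = 0 otherwise. Then λ satisfies both the algebraic condition λ_{nij}λ_{mkp} + λ_{njk}λ_{mip} + λ_{nki}λ_{mjp} + λ_{mij}λ_{nkp} + λ_{mjk}λ_{nip} + λ_{mki}λ_{njp} = 0 for all indices, and the differential condition Σ_i λ_{ijk} ∂λ_{mnp}/∂z_i = Σ_i (λ_{inp} ∂λ_{mjk}/∂z_i + λ_{ipm} ∂λ_{njk}/∂z_i + λ_{imn} ∂λ_{pjk}/∂z_i) for all indices; hence it defines a tri-linear Nambu bracket satisfying the fundamental identity. -/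

import Mathlib

/-- Partial derivative of `f` at `z` in the `i`-th coordinate direction of `ℝ^N`. -/
noncomputable def pd {N : ℕ} (f : (Fin N → ℝ) → ℝ) (i : Fin N) (z : Fin N → ℝ) : ℝ :=
  fderiv ℝ f z (Pi.single i 1)

/-- Tri-linear bracket `{A,B,C}(z) = Σ_{i,j,k} λ_{ijk}(z) ∂_i A ∂_j B ∂_k C` associated to
the tensor field `lam`. -/
noncomputable def nambu {N : ℕ} (lam : Fin N → Fin N → Fin N → (Fin N → ℝ) → ℝ)
    (A B C : (Fin N → ℝ) → ℝ) (z : Fin N → ℝ) : ℝ :=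
  ∑ i : Fin N, ∑ j : Fin N, ∑ k : Fin N,
    lam i j k z * pd A i z * pd B j z * pd C k z

/-- Total antisymmetry of a tensor field: it changes sign under transposition of any two
of its three indices. -/
def TotallyAntisym {N : ℕ} (lam : Fin N → Fin N → Fin N → (Fin N → ℝ) → ℝ) : Prop :=
  ∀ (i j k : Fin N) (z : Fin N → ℝ),
    lam i j k z = - lam j i k z ∧ lam i j k z = - lam i k j z ∧ lam i j k z = - lam k j i z

/-- The pointwise algebraic condition on the Nambu tensor coming from the fundamental
identity. -/
def AlgCond {N : ℕ} (lam : Fin N → Fin N → Fin N → (Fin N → ℝ) → ℝ) : Prop :=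
  ∀ (z : Fin N → ℝ) (i j k m n p : Fin N),
    lam n i j z * lam m k p z + lam n j k z * lam m i p z + lam n k i z * lam m j p z
      + lam m i j z * lam n k p z + lam m j k z * lam n i p z + lam m k i z * lam n j p z = 0

/-- The differential condition on the Nambu tensor coming from the fundamental identity. -/
def DiffCond {N : ℕ} (lam : Fin N → Fin N → Fin N → (Fin N → ℝ) → ℝ) : Prop :=
  ∀ (z : Fin N → ℝ) (j k m n p : Fin N),
    ∑ i : Fin N, lam i j k z * pd (lam m n p) i z
      = ∑ i : Fin N, (lam i n p z * pd (lam m j k) i z + lam i p m z * pd (lam n j k) i z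
          + lam i m n z * pd (lam p j k) i z)

/-- The fundamental identity for the tri-linear bracket associated to `lam`, required for
all smooth observables. -/
def FundId {N : ℕ} (lam : Fin N → Fin N → Fin N → (Fin N → ℝ) → ℝ) : Prop :=
  ∀ A B C D E : (Fin N → ℝ) → ℝ,
    ContDiff ℝ (⊤ : ℕ∞) A → ContDiff ℝ (⊤ : ℕ∞) B → ContDiff ℝ (⊤ : ℕ∞) C → ContDiff ℝ (⊤ : ℕ∞) D → ContDiff ℝ (⊤ : ℕ∞) E →
    ∀ z : Fin N → ℝ,
      nambu lam (nambu lam A B C) D E z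
        = nambu lam (nambu lam A D E) B C z + nambu lam A (nambu lam B D E) C z
          + nambu lam A B (nambu lam C D E) z

/-- Kronecker delta on `Fin N`. -/
def kron {N : ℕ} (a b : Fin N) : ℝ := if a = b then 1 else 0

/-- The totally antisymmetric tensor supported on the index triple `(a,b,c)`, normalized so
that its value at `(a,b,c)` is `1`; it is the Levi-Civita tensor on the indices `(a,b,c)`
and vanishes whenever an index lies outside `{a,b,c}`. -/
noncomputable def tripleTensor {N : ℕ} (a b c : Fin N) (i j k : Fin N) : ℝ :=
  Matrix.det !![kron i a, kron i b, kron i c;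
                kron j a, kron j b, kron j c;
                kron k a, kron k b, kron k c]

/-- The tensor field on `ℝ⁴` with coordinates `z = (q,p,u,v)` (indices `0,1,2,3` for the
paper's `1,2,3,4`): the Levi-Civita tensor on the index triple `{1,2,3}` (value `1` at
`(1,2,3)`), `−2p` times the Levi-Civita tensor on `{1,3,4}` (value `−2p` at `(1,3,4)`),
and zero otherwise. -/
noncomputable def lam4 (i j k : Fin 4) (z : Fin 4 → ℝ) : ℝ :=
  tripleTensor (0 : Fin 4) 1 2 i j k + (-2 * z 1) * tripleTensor (0 : Fin 4) 2 3 i j k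

/-! ### Auxiliary material -/

section Aux

/-- Integer Kronecker delta. -/
def kz (a b : Fin 4) : ℤ := if a = b then 1 else 0

/-- Integer Levi-Civita tensor on `(0,1,2)`. -/
def e1 (i j k : Fin 4) : ℤ :=
  kz i 0 * (kz j 1 * kz k 2 - kz j 2 * kz k 1) - kz i 1 * (kz j 0 * kz k 2 - kz j 2 * kz k 0)
    + kz i 2 * (kz j 0 * kz k 1 - kz j 1 * kz k 0)

/-- Integer Levi-Civita tensor on `(0,2,3)`. -/
def e2 (i j k : Fin 4) : ℤ :=
  kz i 0 * (kz j 2 * kz k 3 - kz j 3 * kz k 2) - kz i 2 * (kz j 0 * kz k 3 - kz j 3 * kz k 0)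
    + kz i 3 * (kz j 0 * kz k 2 - kz j 2 * kz k 0)

lemma kron_eq_kz (a b : Fin 4) : kron a b = (kz a b : ℝ) := by
  unfold kron kz; split <;> simp

lemma lam4_eq (i j k : Fin 4) (z : Fin 4 → ℝ) :
    lam4 i j k z = (e1 i j k : ℝ) + -2 * z 1 * (e2 i j k : ℝ) := by
  unfold lam4 tripleTensor e1 e2
  simp [Matrix.det_fin_three, kron_eq_kz]
  ring

lemma coord_diff {N : ℕ} (j : Fin N) : Differentiable ℝ (fun z : Fin N → ℝ => z j) :=
  (ContinuousLinearMap.proj j : (Fin N → ℝ) →L[ℝ] ℝ).differentiable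

lemma pd_coord {N : ℕ} (j l : Fin N) (z : Fin N → ℝ) :
    pd (fun y => y j) l z = if l = j then 1 else 0 := by
  unfold pd
  have h : fderiv ℝ (fun y : Fin N → ℝ => y j) z
      = (ContinuousLinearMap.proj j : (Fin N → ℝ) →L[ℝ] ℝ) :=
    (ContinuousLinearMap.proj j : (Fin N → ℝ) →L[ℝ] ℝ).hasFDerivAt.fderiv
  rw [h]
  simp [ContinuousLinearMap.proj_apply, Pi.single_apply]
  exact if_congr eq_comm rfl rfl

lemma affine_diff (a b : ℝ) : Differentiable ℝ (fun z : Fin 4 → ℝ => a + -2 * z 1 * b) := by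
  fun_prop

lemma lam4_diff (i j k : Fin 4) : Differentiable ℝ (lam4 i j k) := by
  have h : lam4 i j k = fun y : Fin 4 → ℝ => ((e1 i j k : ℝ) + -2 * y 1 * (e2 i j k : ℝ)) :=
    funext fun y => lam4_eq i j k y
  rw [h]; exact affine_diff _ _

lemma pd_affine (a b : ℝ) (l : Fin 4) (z : Fin 4 → ℝ) :
    pd (fun y : Fin 4 → ℝ => a + -2 * y 1 * b) l z = -2 * b * (if l = 1 then 1 else 0) := by
  have h : (fun y : Fin 4 → ℝ => a + -2 * y 1 * b) = (fun y : Fin 4 → ℝ => (-2*b) * y 1 + a) := by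
    funext y; ring
  rw [h]
  unfold pd
  rw [fderiv_add_const, fderiv_const_mul (coord_diff 1 z)]
  simp only [ContinuousLinearMap.coe_smul', Pi.smul_apply, smul_eq_mul]
  have h2 := pd_coord (1 : Fin 4) l z
  unfold pd at h2
  rw [h2]

lemma pd_lam4 (i j k l : Fin 4) (z : Fin 4 → ℝ) :
    pd (lam4 i j k) l z = -2 * (e2 i j k : ℝ) * (if l = 1 then 1 else 0) := by
  have h : lam4 i j k = fun y : Fin 4 → ℝ => ((e1 i j k : ℝ) + -2 * y 1 * (e2 i j k : ℝ)) :=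
    funext fun y => lam4_eq i j k y
  rw [h, pd_affine]

lemma pd_contDiff {N : ℕ} {f : (Fin N → ℝ) → ℝ} (hf : ContDiff ℝ (⊤ : ℕ∞) f) (i : Fin N) :
    ContDiff ℝ (⊤ : ℕ∞) (pd f i) := by
  have h1 : ContDiff ℝ (⊤ : ℕ∞) (fderiv ℝ f) := hf.fderiv_right (m := (⊤ : ℕ∞)) (by simp)
  exact (ContinuousLinearMap.apply ℝ ℝ (Pi.single i (1:ℝ))).contDiff.comp h1

lemma pd_sum {N : ℕ} {ι : Type*} (s : Finset ι) (f : ι → (Fin N → ℝ) → ℝ) (l : Fin N)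
    (z : Fin N → ℝ) (h : ∀ i ∈ s, DifferentiableAt ℝ (f i) z) :
    pd (fun y => ∑ i ∈ s, f i y) l z = ∑ i ∈ s, pd (f i) l z := by
  unfold pd
  rw [fderiv_fun_sum h]
  simp

lemma pd_mul {N : ℕ} {f g : (Fin N → ℝ) → ℝ} {z : Fin N → ℝ}
    (hf : DifferentiableAt ℝ f z) (hg : DifferentiableAt ℝ g z) (l : Fin N) :
    pd (fun y => f y * g y) l z = pd f l z * g z + f z * pd g l z := by
  unfold pd
  rw [fderiv_fun_mul hf hg]
  simp
  ring

lemma pd_pd_symm {N : ℕ} {f : (Fin N → ℝ) → ℝ} (hf : ContDiff ℝ (⊤ : ℕ∞) f) (i j : Fin N)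
    (z : Fin N → ℝ) : pd (pd f i) j z = pd (pd f j) i z := by
  have hd : DifferentiableAt ℝ (fderiv ℝ f) z :=
    ((hf.fderiv_right (m := (⊤ : ℕ∞)) (by simp)).differentiable (by simp)).differentiableAt
  have hsymm : IsSymmSndFDerivAt ℝ f z := by
    apply hf.contDiffAt.isSymmSndFDerivAt
    rw [minSmoothness_of_isRCLikeNormedField]
    exact WithTop.coe_le_coe.mpr (le_top : (2 : ℕ∞) ≤ ⊤)
  have key : ∀ (v : Fin N → ℝ) (w : Fin N), pd (fun y => fderiv ℝ f y v) w z
      = fderiv ℝ (fderiv ℝ f) z (Pi.single w 1) v := by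
    intro v w
    unfold pd
    rw [fderiv_clm_apply hd (differentiableAt_const v)]
    simp
  show pd (fun y => fderiv ℝ f y (Pi.single i 1)) j z
      = pd (fun y => fderiv ℝ f y (Pi.single j 1)) i z
  rw [key, key]
  exact hsymm _ _

/-- Algebraic coefficient combination. -/
def algTerm (f g : Fin 4 → Fin 4 → Fin 4 → ℤ) (i j k m n p : Fin 4) : ℤ :=
  f n i j * g m k p + f n j k * g m i p + f n k i * g m j p
    + f m i j * g n k p + f m j k * g n i p + f m k i * g n j p

lemma alg11 : ∀ i j k m n p : Fin 4, algTerm e1 e1 i j k m n p = 0 := by decide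
lemma alg12 : ∀ i j k m n p : Fin 4,
    algTerm e1 e2 i j k m n p + algTerm e2 e1 i j k m n p = 0 := by decide
lemma alg22 : ∀ i j k m n p : Fin 4, algTerm e2 e2 i j k m n p = 0 := by decide

lemma diff1 : ∀ j k m n p : Fin 4,
    e1 1 j k * e2 m n p
      = e1 1 n p * e2 m j k + e1 1 p m * e2 n j k + e1 1 m n * e2 p j k := by decide
lemma diff2 : ∀ j k m n p : Fin 4,
    e2 1 j k * e2 m n p
      = e2 1 n p * e2 m j k + e2 1 p m * e2 n j k + e2 1 m n * e2 p j k := by decide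

theorem lam4_algCond : AlgCond lam4 := by
  intro z i j k m n p
  have h1 : ((algTerm e1 e1 i j k m n p : ℤ) : ℝ) = 0 := by rw [alg11]; norm_num
  have h2 : ((algTerm e1 e2 i j k m n p + algTerm e2 e1 i j k m n p : ℤ) : ℝ) = 0 := by
    rw [alg12]; norm_num
  have h3 : ((algTerm e2 e2 i j k m n p : ℤ) : ℝ) = 0 := by rw [alg22]; norm_num
  simp only [algTerm] at h1 h2 h3
  push_cast at h1 h2 h3
  simp only [lam4_eq]
  linear_combination h1 + (-2 * z 1) * h2 + (-2 * z 1)^2 * h3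

theorem lam4_diffCond : DiffCond lam4 := by
  intro z j k m n p
  have h1 : (e1 1 j k : ℝ) * (e2 m n p : ℝ)
      = (e1 1 n p : ℝ) * (e2 m j k : ℝ) + (e1 1 p m : ℝ) * (e2 n j k : ℝ)
        + (e1 1 m n : ℝ) * (e2 p j k : ℝ) := by exact_mod_cast diff1 j k m n p
  have h2 : (e2 1 j k : ℝ) * (e2 m n p : ℝ)
      = (e2 1 n p : ℝ) * (e2 m j k : ℝ) + (e2 1 p m : ℝ) * (e2 n j k : ℝ)
        + (e2 1 m n : ℝ) * (e2 p j k : ℝ) := by exact_mod_cast diff2 j k m n p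
  simp only [Fin.sum_univ_four, pd_lam4, lam4_eq]
  simp
  linear_combination (-2 : ℝ) * h1 + (4 * z 1) * h2

lemma pd_mul4 {f g h q : (Fin 4 → ℝ) → ℝ} {z : Fin 4 → ℝ}
    (hf : DifferentiableAt ℝ f z) (hg : DifferentiableAt ℝ g z)
    (hh : DifferentiableAt ℝ h z) (hq : DifferentiableAt ℝ q z) (l : Fin 4) :
    pd (fun y => f y * g y * h y * q y) l z
      = pd f l z * g z * h z * q z + f z * pd g l z * h z * q z
        + f z * g z * pd h l z * q z + f z * g z * h z * pd q l z := by
  rw [pd_mul ((hf.fun_mul hg).fun_mul hh) hq, pd_mul (hf.fun_mul hg) hh, pd_mul hf hg]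
  ring

lemma pd_nambu4 (A B C : (Fin 4 → ℝ) → ℝ) (hA : ContDiff ℝ (⊤ : ℕ∞) A) (hB : ContDiff ℝ (⊤ : ℕ∞) B)
    (hC : ContDiff ℝ (⊤ : ℕ∞) C) (l : Fin 4) (z : Fin 4 → ℝ) :
    pd (nambu lam4 A B C) l z
      = ∑ i : Fin 4, ∑ j : Fin 4, ∑ k : Fin 4,
          (pd (lam4 i j k) l z * (pd A i z * pd B j z * pd C k z)
            + lam4 i j k z * (pd (pd A i) l z * pd B j z * pd C k z
              + pd A i z * pd (pd B j) l z * pd C k z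
              + pd A i z * pd B j z * pd (pd C k) l z)) := by
  have hdA : ∀ i, Differentiable ℝ (pd A i) := fun i => (pd_contDiff hA i).differentiable (by simp)
  have hdB : ∀ i, Differentiable ℝ (pd B i) := fun i => (pd_contDiff hB i).differentiable (by simp)
  have hdC : ∀ i, Differentiable ℝ (pd C i) := fun i => (pd_contDiff hC i).differentiable (by simp)
  have hterm : ∀ (y : Fin 4 → ℝ) (i j k : Fin 4),
      DifferentiableAt ℝ (fun y => lam4 i j k y * pd A i y * pd B j y * pd C k y) y :=
    fun y i j k => ((((lam4_diff i j k).differentiableAt).mul ((hdA i).differentiableAt)).mul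
      ((hdB j).differentiableAt)).mul ((hdC k).differentiableAt)
  have h0 : nambu lam4 A B C
      = fun y => ∑ i : Fin 4, ∑ j : Fin 4, ∑ k : Fin 4,
          lam4 i j k y * pd A i y * pd B j y * pd C k y := rfl
  rw [h0, pd_sum _ _ _ _ (fun i _ =>
    DifferentiableAt.fun_sum (fun j _ => DifferentiableAt.fun_sum (fun k _ => hterm z i j k)))]
  refine Finset.sum_congr rfl fun i _ => ?_
  rw [pd_sum _ _ _ _ (fun j _ => DifferentiableAt.fun_sum (fun k _ => hterm z i j k))]
  refine Finset.sum_congr rfl fun j _ => ?_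
  rw [pd_sum _ _ _ _ (fun k _ => hterm z i j k)]
  refine Finset.sum_congr rfl fun k _ => ?_
  rw [pd_mul4 ((lam4_diff i j k).differentiableAt) ((hdA i).differentiableAt)
    ((hdB j).differentiableAt) ((hdC k).differentiableAt)]
  ring

set_option maxHeartbeats 8000000 in
theorem lam4_fundId : FundId lam4 := by
  intro A B C D E hA hB hC hD hE z
  have sw := fun (f : (Fin 4 → ℝ) → ℝ) (hf : ContDiff ℝ (⊤ : ℕ∞) f) (i l : Fin 4) =>
    pd_pd_symm hf i l z
  simp only [nambu]
  simp only [Fin.sum_univ_four]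
  simp only [lam4_eq, e1, e2, kz]
  norm_num
  simp only [pd_nambu4 A B C hA hB hC, pd_nambu4 A D E hA hD hE,
    pd_nambu4 B D E hB hD hE, pd_nambu4 C D E hC hD hE]
  simp only [Fin.sum_univ_four]
  simp [lam4_eq, pd_lam4, e1, e2, kz]
  simp only [sw A hA 1 0, sw A hA 2 0, sw A hA 3 0, sw A hA 2 1, sw A hA 3 1, sw A hA 3 2,
    sw B hB 1 0, sw B hB 2 0, sw B hB 3 0, sw B hB 2 1, sw B hB 3 1, sw B hB 3 2,
    sw C hC 1 0, sw C hC 2 0, sw C hC 3 0, sw C hC 2 1, sw C hC 3 1, sw C hC 3 2,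
    sw D hD 1 0, sw D hD 2 0, sw D hD 3 0, sw D hD 2 1, sw D hD 3 1, sw D hD 3 2,
    sw E hE 1 0, sw E hE 2 0, sw E hE 3 0, sw E hE 2 1, sw E hE 3 1, sw E hE 3 2]
  ring

end Aux

/-- the tensor field `λ` on `ℝ⁴` given by `λ_{123} = 1`, `λ_{134} = −2p`
(extended by total antisymmetry, zero otherwise) satisfies both the algebraic and the
differential conditions; hence it defines a tri-linear Nambu bracket satisfying the
fundamental identity. -/
theorem statement17 :
    AlgCond lam4 ∧ DiffCond lam4 ∧ FundId lam4 := by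
  exact ⟨lam4_algCond, lam4_diffCond, lam4_fundId⟩
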